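/- Let Ω = ⊕_{k ≥ 0} Ω^k be a ℤ-graded associative ring equipped with an additive map d : Ω → Ω of degree +1 satisfying d(ωη) = (dω)η + (−1)^k ω (dη) for ω ∈ Ω^k, and d² = 0. Then the Fedosov product ω ∘ η = ωη − (−1)^k (dω)(dη) (for ω ∈ Ω^k homogeneous, extended bilinearly) is associative. -/
import Mathlib


/-- The Fedosov product `x ∘ y = x * y - (-1)^k • (d x * d y)` associated to a degree
tag `k` and a differential `d`. -/
def fedosov {Ω : Type*} [Ring Ω] (d : Ω →+ Ω) (k : ℕ) (x y : Ω) : Ω :=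
  x * y - (-1 : ℤ) ^ k • (d x * d y)

/-- Let `Ω` be a graded associative ring with grading `𝒜`, equipped with an additive map
`d` of degree `+1` satisfying the graded Leibniz rule and `d² = 0`.  Then the Fedosov
product `ω ∘ η = ω * η - (-1)^k • (d ω * d η)` (for `ω` homogeneous of degree `k`,
extended bilinearly) is associative. -/
theorem fedosov_assoc
    {Ω : Type*} [Ring Ω] (𝒜 : ℕ → AddSubgroup Ω)
    (hmul : ∀ {k l : ℕ} {ω η : Ω}, ω ∈ 𝒜 k → η ∈ 𝒜 l → ω * η ∈ 𝒜 (k + l))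
    (d : Ω →+ Ω)
    (hdmem : ∀ {k : ℕ} {ω : Ω}, ω ∈ 𝒜 k → d ω ∈ 𝒜 (k + 1))
    (hleibniz : ∀ (k : ℕ) (ω : Ω), ω ∈ 𝒜 k → ∀ η : Ω,
      d (ω * η) = d ω * η + (-1 : ℤ) ^ k • (ω * d η))
    (hdd : ∀ ω : Ω, d (d ω) = 0)
    (k l m : ℕ) (ω η ζ : Ω) (hω : ω ∈ 𝒜 k) (hη : η ∈ 𝒜 l) (hζ : ζ ∈ 𝒜 m) :
    fedosov d (k + l) (fedosov d k ω η) ζ = fedosov d k ω (fedosov d l η ζ) := by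
  have key : ∀ (n : ℕ) (a b : Ω), a ∈ 𝒜 n →
      d (fedosov d n a b) = d a * b + (-1 : ℤ) ^ n • (a * d b) := by
    intro n a b ha
    simp only [fedosov, map_sub, hleibniz n a ha, AddMonoidHom.map_zsmul,
      hleibniz (n + 1) (d a) (hdmem ha) (d b), hdd, zero_mul, smul_zero, mul_zero,
      add_zero, zero_add, sub_zero]
  have hε : ((-1 : ℤ) ^ k) * ((-1 : ℤ) ^ k) = 1 := by
    rw [← pow_add]; exact Even.neg_one_pow ⟨k, rfl⟩
  have hA := key k ω η hω
  have hB := key l η ζ hη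
  simp only [fedosov] at hA hB
  simp only [fedosov]
  rw [hA, hB]
  simp only [ smul_sub, sub_mul, mul_sub, add_mul, mul_add, smul_mul_assoc,
    mul_smul_comm, smul_smul, pow_add, smul_add]
  have h2 : (-1 : ℤ) ^ k * (-1 : ℤ) ^ l * (-1 : ℤ) ^ k = (-1 : ℤ) ^ l := by
    rw [mul_right_comm, hε, one_mul]
  rw [h2]
  simp only [mul_assoc]
  abel
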